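/- If H is a graph such that H ∧ K₂ is 3-connected, then for every vertex v of H, the graph H − v is not bipartite. -/

import Mathlib

open SimpleGraph

/-- The Kronecker (tensor/direct) product of two simple graphs. -/
def tensorProd {α β : Type*} (G : SimpleGraph α) (H : SimpleGraph β) :
    SimpleGraph (α × β) where
  Adj a b := G.Adj a.1 b.1 ∧ H.Adj a.2 b.2
  symm := ⟨fun _ _ h => ⟨h.1.symm, h.2.symm⟩⟩
  loopless := ⟨fun _ h => G.ne_of_adj h.1 rfl⟩

/-- The complete graph on two vertices. -/
def K2 : SimpleGraph (Fin 2) := ⊤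

/-- A graph is `k`-connected if it has more than `k` vertices and removing any
fewer than `k` vertices leaves a connected graph. -/
def KConnected (k : ℕ) {V : Type*} [Fintype V] (G : SimpleGraph V) : Prop :=
  k < Fintype.card V ∧
    ∀ s : Finset V, s.card < k → (G.induce ((↑s : Set V)ᶜ)).Connected

/-- If `H ∧ K₂` is 3-connected, then for every vertex `v`, the graph `H - v`
is not bipartite. -/
theorem stmt2 {V : Type*} [Fintype V] (H : SimpleGraph V)
    (h3 : KConnected 3 (tensorProd H K2)) :
    ∀ v : V, ¬ (H.induce ({v}ᶜ : Set V)).Colorable 2 := by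
  classical
  intro v hcol
  obtain ⟨c⟩ := hcol
  have hcard := h3.1
  have hcard2 : Fintype.card (V × Fin 2) = Fintype.card V * 2 := by
    simp [Fintype.card_prod]
  -- exists a ≠ v
  have hex : ∃ a : V, a ≠ v := by
    by_contra h
    push_neg at h
    have h1 : Fintype.card V ≤ 1 :=
      Fintype.card_le_one_iff.mpr (fun a b => (h a).trans (h b).symm)
    omega
  obtain ⟨a, ha⟩ := hex
  set s : Finset (V × Fin 2) := {(v, 0), (v, 1)} with hsdef
  have hs : s.card < 3 := by
    have h2 : s.card ≤ 2 := by
      rw [hsdef]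
      exact (Finset.card_insert_le _ _).trans (by simp)
    omega
  have hconn := h3.2 s hs
  have hmem : ∀ b : V × Fin 2, b ∈ ((↑s : Set (V × Fin 2))ᶜ) → b.1 ≠ v := by
    rintro ⟨b1, b2⟩ hb hbv
    apply hb
    subst hbv
    simp only [hsdef, Finset.coe_insert, Finset.coe_singleton, Set.mem_insert_iff,
      Set.mem_singleton_iff, Prod.mk.injEq]
    fin_cases b2 <;> simp
  -- the discriminating function
  set f : ((↑s : Set (V × Fin 2))ᶜ : Set (V × Fin 2)) → Fin 2 :=
    fun x => c ⟨x.1.1, hmem _ x.2⟩ + x.1.2 with hfdef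
  have fin2 : ∀ p q t1 t2 : Fin 2, p ≠ q → t1 ≠ t2 → p + t1 = q + t2 := by decide
  have key : ∀ x y, ((tensorProd H K2).induce ((↑s : Set (V × Fin 2))ᶜ)).Adj x y →
      f x = f y := by
    intro x y hxy
    obtain ⟨hH, hK⟩ : H.Adj x.1.1 y.1.1 ∧ K2.Adj x.1.2 y.1.2 := hxy
    have hc : c ⟨x.1.1, hmem _ x.2⟩ ≠ c ⟨y.1.1, hmem _ y.2⟩ := by
      apply c.valid
      exact hH
    have hK' : x.1.2 ≠ y.1.2 := hK.ne
    exact fin2 _ _ _ _ hc hK'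
  have hwalk : ∀ x y : ((↑s : Set (V × Fin 2))ᶜ : Set (V × Fin 2)),
      ((tensorProd H K2).induce ((↑s : Set (V × Fin 2))ᶜ)).Reachable x y → f x = f y := by
    intro x y hr
    obtain ⟨w⟩ := hr
    induction w with
    | nil => rfl
    | cons h _ ih => exact (key _ _ h).trans ih
  have hamem : ∀ t : Fin 2, ((a, t) : V × Fin 2) ∈ ((↑s : Set (V × Fin 2))ᶜ) := by
    intro t
    simp only [hsdef, Finset.coe_insert, Finset.coe_singleton, Set.mem_compl_iff,
      Set.mem_insert_iff, Set.mem_singleton_iff, Prod.mk.injEq, not_or]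
    exact ⟨fun h => ha h.1, fun h => ha h.1⟩
  have := hwalk ⟨(a, 0), hamem 0⟩ ⟨(a, 1), hamem 1⟩
    (hconn.preconnected ⟨(a, 0), hamem 0⟩ ⟨(a, 1), hamem 1⟩)
  simp only [hfdef] at this
  exact absurd (add_left_cancel this) (by decide)
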